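/- Theorem 2 (DoF converse, combinatorial form): let r ≥ 1 and M ≥ 1 be integers and let d : V(r) → ℕ satisfy d_v ≤ M for every v ∈ V(r) and d_u + d_v ≤ M for every edge {u,v} ∈ E(r). Then the average (1/|V(r)|)·Σ_{v ∈ V(r)} d_v is at most M/2 + 7M/√(|V(r)|) when M is even, and at most M/2 − 1/6 + 7M/√(|V(r)|) when M is odd; equivalently, (1/|V(r)|)·Σ_{v} d_v ≤ ⌊3M/2⌋/3 + 7M/√(|V(r)|) as real numbers. -/

import Mathlib

/-- Vertex set of the cellular interference graph: pairs `(a,b)` identified with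
the Eisenstein integer `a + bω`, where `ω = (−1+i√3)/2`, satisfying
`|Re(a+bω)| ≤ r` and `|Im(a+bω)| ≤ (√3/2)r`, i.e. `|2a − b| ≤ 2r` and `|b| ≤ r`. -/
noncomputable def V (r : ℤ) : Finset (ℤ × ℤ) :=
  (Finset.Icc (-(2 * r)) (2 * r) ×ˢ Finset.Icc (-r) r).filter
    (fun p => |2 * p.1 - p.2| ≤ 2 * r ∧ |p.2| ≤ r)

/-- `f(a,b) = (a+b) mod 3`. -/
def f (p : ℤ × ℤ) : ℤ := (p.1 + p.2) % 3

/-- Triangle index set: `(a,b)` with `f(a,b) ≠ 0` such that all three points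
`(a,b)`, `(a,b+1)`, `(a+1,b+1)` lie in `V r`. -/
noncomputable def T (r : ℤ) : Finset (ℤ × ℤ) :=
  (V r).filter (fun p => f p ≠ 0 ∧ (p.1, p.2 + 1) ∈ V r ∧ (p.1 + 1, p.2 + 1) ∈ V r)

/-- The vertex set of the triangle indexed by `p = (a,b)`:
`{(a,b), (a,b+1), (a+1,b+1)}`. -/
def triVerts (p : ℤ × ℤ) : Finset (ℤ × ℤ) := {p, (p.1, p.2 + 1), (p.1 + 1, p.2 + 1)}

/-- The number `n_v` of triangles of `T r` whose vertex set contains `v`. -/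
noncomputable def nTri (r : ℤ) (v : ℤ × ℤ) : ℕ := ((T r).filter (fun p => v ∈ triVerts p)).card

/-- The boundary vertices: those belonging to fewer than two triangles. -/
noncomputable def Vex (r : ℤ) : Finset (ℤ × ℤ) := (V r).filter (fun v => nTri r v < 2)

/-- Adjacency (edge) relation of the cellular interference graph: `{u,v}` is an
edge iff `u, v ∈ V r` and there is `(a,b) ∈ ℤ²` with `(a+b) mod 3 ≠ 0` such that
`{u,v}` is one of `{(a,b),(a,b+1)}`, `{(a,b),(a+1,b+1)}`, `{(a,b+1),(a+1,b+1)}`. -/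
def Adj (r : ℤ) (u v : ℤ × ℤ) : Prop :=
  u ∈ V r ∧ v ∈ V r ∧ ∃ a b : ℤ, (a + b) % 3 ≠ 0 ∧
    ( ({u, v} : Set (ℤ × ℤ)) = {(a, b), (a, b + 1)} ∨
      ({u, v} : Set (ℤ × ℤ)) = {(a, b), (a + 1, b + 1)} ∨
      ({u, v} : Set (ℤ × ℤ)) = {(a, b + 1), (a + 1, b + 1)} )

/-!
Every `p ∈ T r` spans a triangle of the interference graph, so adding its three edge constraints
gives `∑_{v ∈ triVerts p} d v ≤ ⌊3M/2⌋`. Each vertex lies in at most two such triangles, since the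
three candidate triangles through it have pairwise distinct values of `f`, one of them `0`; away
from a boundary layer of width one it lies in exactly two. Double counting therefore gives
`6 ∑ d ≤ 2 |V| ⌊3M/2⌋ + 6 M |Vex|`, and the boundary `Vex` has `O(r)` vertices while `|V|` is of
order `r²`, so `|Vex| ≤ 7 √|V|`.
-/

open Finset

lemma mem_V_iff {r : ℤ} {p : ℤ × ℤ} : p ∈ V r ↔ |2 * p.1 - p.2| ≤ 2 * r ∧ |p.2| ≤ r := by
  simp only [V, mem_filter, mem_product, mem_Icc, abs_le]
  omega

lemma mem_T_iff {r : ℤ} {p : ℤ × ℤ} :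
    p ∈ T r ↔ p ∈ V r ∧ f p ≠ 0 ∧ (p.1, p.2 + 1) ∈ V r ∧ (p.1 + 1, p.2 + 1) ∈ V r := by
  simp [T]

lemma mem_triVerts_iff {p v : ℤ × ℤ} :
    v ∈ triVerts p ↔ p = v ∨ p = (v.1, v.2 - 1) ∨ p = (v.1 - 1, v.2 - 1) := by
  obtain ⟨a, b⟩ := p
  obtain ⟨x, y⟩ := v
  simp only [triVerts, mem_insert, mem_singleton, Prod.mk.injEq]
  omega

lemma sum_triVerts {β : Type*} [AddCommMonoid β] (g : ℤ × ℤ → β) (p : ℤ × ℤ) :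
    ∑ v ∈ triVerts p, g v = g p + g (p.1, p.2 + 1) + g (p.1 + 1, p.2 + 1) := by
  rw [triVerts, sum_insert, sum_pair, add_assoc]
  · simp
  · simp [Prod.ext_iff]

lemma triVerts_subset_V {r : ℤ} {p : ℤ × ℤ} (hp : p ∈ T r) : triVerts p ⊆ V r := by
  obtain ⟨hp, -, hp₁, hp₂⟩ := mem_T_iff.1 hp
  intro v hv
  simp only [triVerts, mem_insert, mem_singleton] at hv
  rcases hv with rfl | rfl | rfl <;> assumption

lemma sum_sum_triVerts (r : ℤ) (g : ℤ × ℤ → ℕ) :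
    ∑ p ∈ T r, ∑ v ∈ triVerts p, g v = ∑ v ∈ V r, nTri r v * g v := by
  rw [sum_comm' (s' := fun v => (T r).filter (v ∈ triVerts ·)) (t' := V r)]
  · simp [nTri]
  · intro p v
    simp only [mem_filter]
    exact ⟨fun ⟨hp, hv⟩ => ⟨⟨hp, hv⟩, triVerts_subset_V hp hv⟩, fun ⟨⟨hp, hv⟩, _⟩ => ⟨hp, hv⟩⟩

lemma nTri_le_two (r : ℤ) (v : ℤ × ℤ) : nTri r v ≤ 2 := by
  have h := card_le_card_of_injOn f (s := (T r).filter (v ∈ triVerts ·)) (t := Icc 1 2)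
    (fun p hp => by
      simp only [coe_filter, Set.mem_ofPred_eq, mem_T_iff, f] at hp
      simp only [coe_Icc, Set.mem_Icc, f]
      omega)
    (fun p hp q hq hpq => by
      simp only [coe_filter, Set.mem_ofPred_eq, mem_triVerts_iff] at hp hq
      simp only [f] at hpq
      rcases hp.2 with rfl | rfl | rfl <;> rcases hq.2 with rfl | rfl | rfl <;>
        first | rfl | (exfalso; omega))
  simpa [nTri] using h

lemma two_le_nTri {r : ℤ} {v : ℤ × ℤ} (h₁ : |2 * v.1 - v.2| ≤ 2 * r - 3) (h₂ : |v.2| ≤ r - 1) :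
    2 ≤ nTri r v := by
  obtain ⟨x, y⟩ := v
  rw [abs_le] at h₁ h₂
  have hmem : ∀ p, (p = (x, y) ∨ p = (x, y - 1) ∨ p = (x - 1, y - 1)) → f p ≠ 0 →
      p ∈ (T r).filter ((x, y) ∈ triVerts ·) := by
    rintro ⟨a, b⟩ hp hf
    simp only [mem_filter, mem_T_iff, mem_V_iff, mem_triVerts_iff, abs_le, Prod.mk.injEq] at hp ⊢
    omega
  have hf : ∀ a b : ℤ, (a + b) % 3 ≠ 0 → f (a, b) ≠ 0 := fun _ _ h => h
  -- of the three triangles through `(x, y)`, pick the two with `f ≠ 0`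
  rcases (by omega : (x + y) % 3 = 0 ∨ (x + y) % 3 = 1 ∨ (x + y) % 3 = 2) with h | h | h <;>
    [refine one_lt_card.2 ⟨(x, y - 1), ?_, (x - 1, y - 1), ?_, ?_⟩;
     refine one_lt_card.2 ⟨(x, y), ?_, (x - 1, y - 1), ?_, ?_⟩;
     refine one_lt_card.2 ⟨(x, y), ?_, (x, y - 1), ?_, ?_⟩]
  all_goals first
    | exact hmem _ (by simp) (hf _ _ (by omega))
    | simp only [ne_eq, Prod.mk.injEq]; omega

lemma sum_triVerts_le {r : ℤ} {M : ℕ} {d : ℤ × ℤ → ℕ}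
    (hedge : ∀ u v : ℤ × ℤ, Adj r u v → d u + d v ≤ M) {p : ℤ × ℤ} (hp : p ∈ T r) :
    ∑ v ∈ triVerts p, d v ≤ 3 * M / 2 := by
  obtain ⟨hp₀, hf, hp₁, hp₂⟩ := mem_T_iff.1 hp
  have e₀₁ := hedge _ _ ⟨hp₀, hp₁, p.1, p.2, hf, Or.inl rfl⟩
  have e₀₂ := hedge _ _ ⟨hp₀, hp₂, p.1, p.2, hf, Or.inr (Or.inl rfl)⟩
  have e₁₂ := hedge _ _ ⟨hp₁, hp₂, p.1, p.2, hf, Or.inr (Or.inr rfl)⟩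
  rw [sum_triVerts]
  omega

lemma three_mul_card_T_le (r : ℤ) : 3 * #(T r) ≤ 2 * #(V r) := calc
  3 * #(T r) = ∑ p ∈ T r, ∑ _v ∈ triVerts p, 1 := by
    simp only [sum_triVerts fun _ => (1 : ℕ)]
    simp [mul_comm]
  _ = ∑ v ∈ V r, nTri r v := by simpa using sum_sum_triVerts r fun _ => 1
  _ ≤ ∑ _v ∈ V r, 2 := sum_le_sum fun v _ => nTri_le_two r v
  _ = 2 * #(V r) := by simp [mul_comm]

lemma two_mul_sum_le {r : ℤ} {M : ℕ} {d : ℤ × ℤ → ℕ} (hd : ∀ v ∈ V r, d v ≤ M)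
    (hedge : ∀ u v : ℤ × ℤ, Adj r u v → d u + d v ≤ M) :
    2 * ∑ v ∈ V r, d v ≤ #(T r) * (3 * M / 2) + 2 * M * #(Vex r) := calc
  2 * ∑ v ∈ V r, d v = ∑ v ∈ V r, nTri r v * d v + ∑ v ∈ V r, (2 - nTri r v) * d v := by
    rw [mul_sum, ← sum_add_distrib]
    exact sum_congr rfl fun v _ => by rw [← add_mul, Nat.add_sub_cancel' (nTri_le_two r v)]
  _ ≤ ∑ p ∈ T r, 3 * M / 2 + ∑ v ∈ Vex r, 2 * M := by
    gcongr
    · rw [← sum_sum_triVerts]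
      exact sum_le_sum fun p hp => sum_triVerts_le hedge hp
    · rw [Vex, sum_filter]
      refine sum_le_sum fun v hv => ?_
      split_ifs with h
      · exact Nat.mul_le_mul (by omega) (hd v hv)
      · simp [show 2 - nTri r v = 0 by omega]
  _ = #(T r) * (3 * M / 2) + 2 * M * #(Vex r) := by simp [mul_comm]

lemma card_V_ge {r : ℤ} (hr : 0 ≤ r) : 2 * r * (2 * r + 1) ≤ #(V r) := by
  -- shear the rectangle `[1, 2r] × [-r, r]` into `V r`
  have h := card_le_card_of_injOn (fun q : ℤ × ℤ => (q.1 - r + q.2 / 2, q.2))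
    (s := Icc 1 (2 * r) ×ˢ Icc (-r) r) (t := V r)
    (fun q hq => by
      simp only [coe_product, coe_Icc, Set.mem_prod, Set.mem_Icc] at hq
      simp only [mem_coe, mem_V_iff, abs_le]
      omega)
    (fun q _ q' _ h => by
      simp only [Prod.mk.injEq] at h
      exact Prod.ext (by omega) h.2)
  rw [card_product, Int.card_Icc, Int.card_Icc] at h
  zify at h
  rw [Int.toNat_of_nonneg (by omega), Int.toNat_of_nonneg (by omega)] at h
  linarith

lemma card_V_pos {r : ℤ} (hr : 0 ≤ r) : 0 < #(V r) :=
  card_pos.2 ⟨(0, 0), mem_V_iff.2 (by simpa using hr)⟩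

noncomputable def rimRows (r : ℤ) : Finset (ℤ × ℤ) := (V r).filter fun v => r ≤ |v.2|

noncomputable def rimSides (r : ℤ) : Finset (ℤ × ℤ) :=
  (V r).filter fun v => |v.2| < r ∧ 2 * r - 2 ≤ |2 * v.1 - v.2|

lemma Vex_subset (r : ℤ) : Vex r ⊆ rimRows r ∪ rimSides r := by
  intro v hv
  obtain ⟨hvV, hv⟩ := mem_filter.1 hv
  have hint : ¬(|2 * v.1 - v.2| ≤ 2 * r - 3 ∧ |v.2| ≤ r - 1) := fun h => by
    have := two_le_nTri h.1 h.2
    omega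
  have := mem_V_iff.1 hvV
  simp only [rimRows, rimSides, mem_union, mem_filter, hvV, true_and]
  simp only [abs_le, le_abs, abs_lt] at hint this ⊢
  omega

lemma card_rimRows_le {r : ℤ} (hr : 0 ≤ r) : #(rimRows r) ≤ 6 * r + 1 := by
  -- `v ↦ v.1 + v.2` is positive on the top row and negative on the bottom row
  have h := card_le_card_of_injOn (fun v : ℤ × ℤ => v.1 + v.2) (s := rimRows r)
    (t := Icc (-(3 * r)) (3 * r))
    (fun v hv => by
      simp only [rimRows, mem_coe, mem_filter, mem_V_iff, abs_le, le_abs] at hv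
      simp only [coe_Icc, Set.mem_Icc]
      omega)
    (fun v hv w hw h => by
      simp only [rimRows, mem_coe, mem_filter, mem_V_iff, abs_le, le_abs] at hv hw
      dsimp only at h
      exact Prod.ext (by omega) (by omega))
  rw [Int.card_Icc] at h
  omega

lemma card_rimSides_le {r : ℤ} (hr : 1 ≤ r) : #(rimSides r) ≤ 4 * (2 * r - 1) := by
  -- `2 * v.1 - v.2` has the parity of `v.2`, so `(2 * v.1 - v.2) / 2` and `v.2` determine `v`
  have h := card_le_card_of_injOn (fun v : ℤ × ℤ => (v.2, (2 * v.1 - v.2) / 2))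
    (s := rimSides r) (t := Icc (-(r - 1)) (r - 1) ×ˢ {-r, -r + 1, r - 1, r})
    (fun v hv => by
      simp only [rimSides, mem_coe, mem_filter, mem_V_iff, abs_le, le_abs, abs_lt] at hv
      simp only [coe_product, coe_Icc, Set.mem_prod, Set.mem_Icc, coe_insert, coe_singleton,
        Set.mem_insert_iff, Set.mem_singleton_iff]
      omega)
    (fun v _ w _ h => by
      simp only [Prod.mk.injEq] at h
      exact Prod.ext (by omega) h.1)
  rw [card_product, Int.card_Icc] at h
  grw [card_le_four] at h
  omega

lemma card_Vex_le {r : ℤ} (hr : 1 ≤ r) : (#(Vex r) : ℤ) ≤ 14 * r - 3 := by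
  have := card_le_card (Vex_subset r)
  have := card_union_le (rimRows r) (rimSides r)
  have := card_rimRows_le (r := r) (by omega)
  have := card_rimSides_le hr
  omega

lemma card_Vex_div_le {r : ℤ} (hr : 1 ≤ r) :
    (#(Vex r) : ℝ) / #(V r) ≤ 7 / √(#(V r)) := by
  have hV := card_V_ge (r := r) (by omega)
  have hsq : (#(Vex r) : ℤ) ^ 2 ≤ 49 * #(V r) := by
    have := card_Vex_le hr
    nlinarith
  have hN : (0 : ℝ) < #(V r) := by exact_mod_cast card_V_pos (by omega)
  have hE : (#(Vex r) : ℝ) ≤ 7 * √(#(V r)) := by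
    rw [show (7 : ℝ) = √49 by rw [show (49 : ℝ) = 7 ^ 2 by norm_num, Real.sqrt_sq (by norm_num)],
      ← Real.sqrt_mul (by norm_num), Real.le_sqrt (by positivity) (by positivity)]
    exact_mod_cast hsq
  rw [div_le_div_iff₀ hN (Real.sqrt_pos.2 hN)]
  calc (#(Vex r) : ℝ) * √(#(V r)) ≤ 7 * √(#(V r)) * √(#(V r)) := by gcongr
    _ = 7 * #(V r) := by rw [mul_assoc, Real.mul_self_sqrt hN.le]

theorem dof_converse_general (r : ℤ) (hr : 1 ≤ r) (M : ℕ)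
    (d : ℤ × ℤ → ℕ)
    (hd : ∀ v ∈ V r, d v ≤ M)
    (hedge : ∀ u v : ℤ × ℤ, Adj r u v → d u + d v ≤ M) :
    (∑ v ∈ V r, (d v : ℝ)) / ((V r).card : ℝ) ≤
      ((3 * M / 2 : ℕ) : ℝ) / 3 + 7 * M / Real.sqrt ((V r).card : ℝ) := by
  have hsum : 6 * ∑ v ∈ V r, d v ≤ 2 * #(V r) * (3 * M / 2) + 6 * M * #(Vex r) := by
    have := two_mul_sum_le hd hedge
    have := Nat.mul_le_mul_right (3 * M / 2) (three_mul_card_T_le r)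
    nlinarith
  have hN : (0 : ℝ) < #(V r) := by exact_mod_cast card_V_pos (by omega)
  calc (∑ v ∈ V r, (d v : ℝ)) / #(V r)
      ≤ ((3 * M / 2 : ℕ) : ℝ) / 3 + M * (#(Vex r) / #(V r)) := by
        rw [div_le_iff₀ hN, add_mul, mul_assoc, div_mul_cancel₀ _ hN.ne']
        have : 6 * ∑ v ∈ V r, (d v : ℝ) ≤ 2 * #(V r) * (3 * M / 2 : ℕ) + 6 * M * #(Vex r) := by
          exact_mod_cast hsum
        linarith
    _ ≤ ((3 * M / 2 : ℕ) : ℝ) / 3 + M * (7 / √(#(V r))) := by grw [card_Vex_div_le hr]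
    _ = ((3 * M / 2 : ℕ) : ℝ) / 3 + 7 * M / √(#(V r)) := by ring

/-- **Theorem 2 (DoF converse, combinatorial form).** If `d : V(r) → ℕ`
satisfies `d_v ≤ M` for all `v ∈ V(r)` and `d_u + d_v ≤ M` on every edge, then
the average `(1/|V(r)|)·Σ_{v ∈ V(r)} d_v` is at most
`⌊3M/2⌋/3 + 7M/√(|V(r)|)` as real numbers (which equals
`M/2 + 7M/√(|V(r)|)` for even `M` and `M/2 − 1/6 + 7M/√(|V(r)|)` for odd `M`). -/
theorem dof_converse (r : ℤ) (hr : 1 ≤ r) (M : ℕ) (hM : 1 ≤ M)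
    (d : ℤ × ℤ → ℕ)
    (hd : ∀ v ∈ V r, d v ≤ M)
    (hedge : ∀ u v : ℤ × ℤ, Adj r u v → d u + d v ≤ M) :
    (∑ v ∈ V r, (d v : ℝ)) / ((V r).card : ℝ) ≤
      ((3 * M / 2 : ℕ) : ℝ) / 3 + 7 * M / Real.sqrt ((V r).card : ℝ) :=
  dof_converse_general r hr M d hd hedge
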